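/- Let n = 3g−3 and let L be a linear system of quadratic forms on ℂⁿ with dim L = (g−1)(g−6)/2. If Y ⊆ ℂⁿ is a subspace contained in the common zero locus of all quadrics in L (in the strong sense that every quadric in L vanishes on the symmetric square of Y), then L embeds into the space of quadratic forms vanishing on Y, whence (g−1)(g−6)/2 ≤ n(n+1)/2 − (dim Y)(dim Y + 1)/2, and therefore dim Y ≤ (−1 + √(32g² − 32g + 1))/2. -/

import Mathlib

/-!
A quadratic form in characteristic `≠ 2` is determined by its polar values on unordered pairs of
vectors of a basis. Take a basis of `ℂⁿ` extending one of `Y`: a form vanishing on `Y` has zero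
polar value on each of the `(m+1).choose 2` pairs inside `Y`, so such forms embed into a space of
dimension `(n+1).choose 2 - (m+1).choose 2`. For `n = 3g - 3` this reads
`m(m+1) ≤ 8g² - 8g` (as `(g-1)(g-6)` is even), i.e. `(2m+1)² ≤ 32g² - 32g + 1`.
-/

open Module QuadraticMap

namespace QuadraticMap

variable {ι R M N : Type*} [CommRing R] [AddCommGroup M] [Module R M] [AddCommGroup N] [Module R N]

theorem ext_polar_basis (h2 : IsUnit (2 : R)) (b : Basis ι R M) {Q Q' : QuadraticMap R M N}
    (h : ∀ i j, polar Q (b i) (b j) = polar Q' (b i) (b j)) : Q = Q' :=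
  polarBilin_injective h2 <| b.ext fun i => b.ext fun j => h i j

noncomputable def polarSym2Basis (b : Basis ι R M) : QuadraticMap R M N →ₗ[R] Sym2 ι → N where
  toFun Q z := polarSym2 Q (z.map b)
  map_add' Q Q' := funext fun z => by
    induction z using Sym2.ind; simp [polar_add]
  map_smul' c Q := funext fun z => by
    induction z using Sym2.ind; simp [polar_smul]

theorem polar_eq_zero_of_forall_mem_eq_zero {Y : Submodule R M} {Q : QuadraticMap R M N}
    (hQ : ∀ v ∈ Y, Q v = 0) {v w : M} (hv : v ∈ Y) (hw : w ∈ Y) : polar Q v w = 0 := by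
  simp [polar, hQ v hv, hQ w hw, hQ _ (Y.add_mem hv hw)]

end QuadraticMap

namespace QuadraticForm

variable {ι K V : Type*} [Field K] [NeZero (2 : K)] [AddCommGroup V] [Module K V]

theorem finrank_add_card_le_card_sym2 [Fintype ι] (b : Basis ι K V)
    (W : Submodule K (QuadraticForm K V)) (T : Finset (Sym2 ι))
    (hT : ∀ Q ∈ W, ∀ z ∈ T, polarSym2 Q (z.map b) = 0) :
    finrank K W + T.card ≤ Fintype.card (Sym2 ι) := by
  classical
  let Φ : W →ₗ[K] (Tᶜ : Finset (Sym2 ι)) → K :=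
    LinearMap.funLeft K K Subtype.val ∘ₗ polarSym2Basis b ∘ₗ W.subtype
  have hΦ : Function.Injective Φ := fun Q Q' hQQ' => Subtype.ext <|
    ext_polar_basis (NeZero.ne (2 : K)).isUnit b fun i j => by
      by_cases hij : s(i, j) ∈ T
      · exact (hT Q Q.2 _ hij).trans (hT Q' Q'.2 _ hij).symm
      · exact congrFun hQQ' ⟨s(i, j), Finset.mem_compl.mpr hij⟩
  calc finrank K W + T.card ≤ Fintype.card (Tᶜ : Finset (Sym2 ι)) + T.card := by
        simpa using LinearMap.finrank_le_finrank_of_injective hΦ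
    _ = Fintype.card (Sym2 ι) := by
        rw [Fintype.card_coe, add_comm, Finset.card_add_card_compl]

theorem finrank_add_choose_le_of_forall_mem_eq_zero [FiniteDimensional K V] (Y : Submodule K V)
    (W : Submodule K (QuadraticForm K V)) (hW : ∀ Q ∈ W, ∀ v ∈ Y, Q v = 0) :
    finrank K W + (finrank K Y + 1).choose 2 ≤ (finrank K V + 1).choose 2 := by
  obtain ⟨Y', hY⟩ := Y.exists_isCompl
  let b := ((finBasis K Y).prod (finBasis K Y')).map (Y.prodEquivOfIsCompl Y' hY)
  have hb : ∀ i, b (Sum.inl i) ∈ Y := fun i => by simp [b]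
  let T : Finset (Sym2 (Fin (finrank K Y) ⊕ Fin (finrank K Y'))) :=
    Finset.univ.map ⟨Sym2.map Sum.inl, Sym2.map.injective Sum.inl_injective⟩
  have hT : ∀ Q ∈ W, ∀ z ∈ T, polarSym2 Q (z.map b) = 0 := by
    intro Q hQ _ hz
    obtain ⟨z, -, rfl⟩ := Finset.mem_map.mp hz
    induction z using Sym2.ind
    exact polar_eq_zero_of_forall_mem_eq_zero (hW Q hQ) (hb _) (hb _)
  simpa [T, Sym2.card, ← Y.finrank_add_eq_of_isCompl hY] using
    finrank_add_card_le_card_sym2 b W T hT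

end QuadraticForm

theorem two_mul_succ_choose_two (k : ℕ) : 2 * (k + 1).choose 2 = k * (k + 1) := by
  have := Nat.add_one_mul_choose_eq k 1
  simp only [Nat.choose_one_right] at this
  linarith

theorem le_neg_one_add_sqrt_div_two {t x : ℝ} (h : t * (t + 1) ≤ x) :
    t ≤ (-1 + Real.sqrt (4 * x + 1)) / 2 := by
  have : 2 * t + 1 ≤ Real.sqrt (4 * x + 1) := Real.le_sqrt_of_sq_le (by nlinarith)
  linarith

theorem base_locus_bounds_of_add_choose_le {g n m D : ℕ} (hg : 1 ≤ g) (hn : n = 3 * g - 3)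
    (hD : (D : ℤ) = ((g : ℤ) - 1) * (g - 6) / 2)
    (h : D + (m + 1).choose 2 ≤ (n + 1).choose 2) :
    ((g : ℤ) - 1) * (g - 6) / 2 ≤ (n : ℤ) * (n + 1) / 2 - (m : ℤ) * (m + 1) / 2 ∧
      (m : ℝ) ≤ (-1 + Real.sqrt (32 * (g : ℝ) ^ 2 - 32 * g + 1)) / 2 := by
  have hchoose (k : ℕ) : (k : ℤ) * (k + 1) = 2 * (k + 1).choose 2 := by
    exact_mod_cast (two_mul_succ_choose_two k).symm
  have heven : Even (((g : ℤ) - 1) * (g - 6)) := by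
    rcases Int.even_or_odd (g : ℤ) with ⟨k, hk⟩ | ⟨k, hk⟩
    · exact Int.even_mul.mpr (Or.inr ⟨k - 3, by omega⟩)
    · exact Int.even_mul.mpr (Or.inl ⟨k, by omega⟩)
  have hD2 : 2 * (D : ℤ) = ((g : ℤ) - 1) * (g - 6) := by
    rw [hD, Int.mul_ediv_cancel' heven.two_dvd]
  have hZ : (D : ℤ) + (m + 1).choose 2 ≤ (n + 1).choose 2 := by exact_mod_cast h
  refine ⟨?_, ?_⟩
  · rw [← hD, hchoose n, hchoose m, Int.mul_ediv_cancel_left _ two_ne_zero,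
      Int.mul_ediv_cancel_left _ two_ne_zero]
    linarith
  · have hnZ : (n : ℤ) = 3 * g - 3 := by omega
    have hm : (m : ℤ) * (m + 1) ≤ 8 * g ^ 2 - 8 * g := by
      nlinarith [hchoose n, hchoose m]
    have hmR : (m : ℝ) * (m + 1) ≤ 8 * g ^ 2 - 8 * g := by exact_mod_cast hm
    convert le_neg_one_add_sqrt_div_two hmR using 4
    ring

/-- If `L` is a linear system of quadratic forms on `ℂⁿ` (`n = 3g-3`) of
dimension `(g-1)(g-6)/2` and `Y` is a subspace on which every quadric of `L`
vanishes (together with its polar form), then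
`(g-1)(g-6)/2 ≤ n(n+1)/2 - m(m+1)/2` where `m = dim Y`, and
`m ≤ (-1 + √(32g²-32g+1))/2`. -/
theorem base_locus_dim_bound
    (g : ℕ) (hg : 9 ≤ g) (n : ℕ) (hn : n = 3 * g - 3)
    (L : Submodule ℂ (QuadraticForm ℂ (Fin n → ℂ)))
    (hL : (Module.finrank ℂ L : ℤ) = (g - 1) * (g - 6) / 2)
    (Y : Submodule ℂ (Fin n → ℂ))
    (hvan : ∀ q ∈ L, (∀ v ∈ Y, q v = 0) ∧
      (∀ v ∈ Y, ∀ w ∈ Y, QuadraticMap.polar q v w = 0)) :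
    ((g : ℤ) - 1) * (g - 6) / 2 ≤
        (n : ℤ) * (n + 1) / 2 -
          (Module.finrank ℂ Y : ℤ) * (Module.finrank ℂ Y + 1) / 2 ∧
      (Module.finrank ℂ Y : ℝ) ≤
        (-1 + Real.sqrt (32 * (g : ℝ) ^ 2 - 32 * g + 1)) / 2 := by
  have hLY := QuadraticForm.finrank_add_choose_le_of_forall_mem_eq_zero Y L
    fun q hq => (hvan q hq).1
  rw [finrank_fin_fun] at hLY
  exact base_locus_bounds_of_add_choose_le (by omega) hn hL hLY
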